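/- arXiv:2001.01920 — 4 statements merged into one kernel-verified Lean document; each statement's English description precedes it below -/
import Mathlib

section
/- Fix a base point w₀ ∈ ℝ^d, a vector g ∈ ℝ^d, and constants λ ≥ 0 and μ > λ. Suppose F_k : ℝ^d → ℝ is continuously differentiable and λ-weakly convex, i.e. the map w ↦ F_k(w) + (λ/2)‖w‖² is convex. Then the FedDANE subproblem P_k(w) = F_k(w) + ⟨g − ∇F_k(w₀), w − w₀⟩ + (μ/2)‖w − w₀‖² is (μ−λ)-strongly convex, ∇P_k(w₀) = g, and if w̲ is a minimizer of P_k then (μ−λ)‖w̲ − w₀‖ ≤ ‖g‖. -/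
/-!
`P − ((μ − λ)/2)‖·‖²` is the convex function `F + (λ/2)‖·‖²` plus an affine one, so `P` is
`(μ − λ)`-strongly convex, and its gradient `∇F w + g − ∇F w₀ + μ (w − w₀)` equals `g` at `w₀`.
Adding the two first-order inequalities of a strongly convex function at `w₀` and at a minimizer
`w̲` (where the gradient vanishes) gives `(μ − λ)‖w̲ − w₀‖² ≤ ⟪g, w₀ − w̲⟫`; conclude by
Cauchy–Schwarz.
-/

open scoped RealInnerProductSpace

open InnerProductSpace Set

theorem ConvexOn.tangent_le_of_hasFDerivAt {E : Type*} [NormedAddCommGroup E] [NormedSpace ℝ E]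
    {f : E → ℝ} {f' : StrongDual ℝ E} {x : E} (hf : ConvexOn ℝ univ f) (hx : HasFDerivAt f f' x)
    (y : E) : f x + f' (y - x) ≤ f y := by
  have hline : ConvexOn ℝ univ (f ∘ AffineMap.lineMap (k := ℝ) x y) := hf.comp_affineMap _
  have hderiv : HasDerivAt (f ∘ AffineMap.lineMap (k := ℝ) x y) (f' (y - x)) 0 := by
    rw [← AffineMap.lineMap_apply_zero (k := ℝ) x y] at hx
    exact hx.comp_hasDerivAt 0 AffineMap.hasDerivAt_lineMap
  have := hline.le_slope_of_hasDerivAt (mem_univ 0) (mem_univ 1) one_pos hderiv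
  simp only [slope_def_field, Function.comp_apply, AffineMap.lineMap_apply_zero,
    AffineMap.lineMap_apply_one, sub_zero, div_one] at this
  linarith

section InnerProductSpace

variable {E : Type*} [NormedAddCommGroup E] [InnerProductSpace ℝ E] {f : E → ℝ}

theorem ConvexOn.strongConvexOn_add_inner_sub_add_norm_sub_sq {lam μ : ℝ}
    (hf : ConvexOn ℝ univ fun w => f w + lam / 2 * ‖w‖ ^ 2) (c z : E) :
    StrongConvexOn univ (μ - lam) fun w => f w + ⟪c, w - z⟫ + μ / 2 * ‖w - z‖ ^ 2 := by
  rw [strongConvexOn_iff_convex]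
  have haff : ConvexOn ℝ univ fun w => ⟪c - μ • z, w⟫ + (μ / 2 * ‖z‖ ^ 2 - ⟪c, z⟫) :=
    ((innerSL ℝ (c - μ • z)).toLinearMap.convexOn convex_univ).add_const _
  refine (hf.add haff).congr fun w _ => ?_
  simp only [Pi.add_apply, inner_sub_left, inner_sub_right, real_inner_smul_left,
    norm_sub_sq_real, real_inner_comm z w]
  ring

variable [CompleteSpace E] {m : ℝ} {x y f'x f'y : E}

theorem IsLocalMin.hasGradientAt_eq_zero (hmin : IsLocalMin f x) (hx : HasGradientAt f f'x x) :
    f'x = 0 :=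
  (toDual ℝ E).map_eq_zero_iff.1 (hmin.hasFDerivAt_eq_zero (hasGradientAt_iff_hasFDerivAt.1 hx))

theorem StrongConvexOn.tangent_add_le_of_hasGradientAt (hf : StrongConvexOn univ m f)
    (hx : HasGradientAt f f'x x) (y : E) :
    f x + ⟪f'x, y - x⟫ + m / 2 * ‖y - x‖ ^ 2 ≤ f y := by
  have hsq : HasFDerivAt (fun w : E => m / 2 * ‖w‖ ^ 2) (toDual ℝ E (m • x)) x := by
    refine ((hasStrictFDerivAt_norm_sq x).hasFDerivAt.const_mul (m / 2)).congr_fderiv ?_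
    ext v
    simp only [smul_apply, coe_innerSL_apply, nsmul_eq_mul, Nat.cast_ofNat, smul_eq_mul, map_smul,
      toDual_apply_apply]
    ring
  have := (strongConvexOn_iff_convex.1 hf).tangent_le_of_hasFDerivAt
    ((hasGradientAt_iff_hasFDerivAt.1 hx).sub hsq) y
  simp only [sub_apply, toDual_apply_apply, real_inner_smul_left] at this
  have hexp : ‖y - x‖ ^ 2 = ‖y‖ ^ 2 - ‖x‖ ^ 2 - 2 * ⟪x, y - x⟫ := by
    rw [norm_sub_sq_real, inner_sub_right, real_inner_self_eq_norm_sq, real_inner_comm]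
    ring
  rw [hexp]
  linarith

theorem StrongConvexOn.mul_norm_sub_le_norm_sub_of_hasGradientAt (hf : StrongConvexOn univ m f)
    (hx : HasGradientAt f f'x x) (hy : HasGradientAt f f'y y) :
    m * ‖x - y‖ ≤ ‖f'x - f'y‖ := by
  have hxy := hf.tangent_add_le_of_hasGradientAt hx y
  have hyx := hf.tangent_add_le_of_hasGradientAt hy x
  have hmono : m * ‖x - y‖ ^ 2 ≤ ⟪f'x - f'y, x - y⟫ := by
    rw [norm_sub_rev y x, inner_sub_left] at *
    rw [← neg_sub x y, inner_neg_right] at hxy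
    linarith
  rcases (norm_nonneg (x - y)).eq_or_lt with h0 | hpos
  · rw [← h0, mul_zero]
    exact norm_nonneg _
  · refine le_of_mul_le_mul_right ?_ hpos
    calc m * ‖x - y‖ * ‖x - y‖ = m * ‖x - y‖ ^ 2 := by ring
      _ ≤ ⟪f'x - f'y, x - y⟫ := hmono
      _ ≤ ‖f'x - f'y‖ * ‖x - y‖ := real_inner_le_norm _ _

theorem hasGradientAt_add_inner_sub_add_norm_sub_sq (hf : HasGradientAt f f'x x) (c z : E)
    (μ : ℝ) : HasGradientAt (fun w => f w + ⟪c, w - z⟫ + μ / 2 * ‖w - z‖ ^ 2)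
      (f'x + c + μ • (x - z)) x := by
  rw [hasGradientAt_iff_hasFDerivAt] at hf ⊢
  have hsub : HasFDerivAt (fun w : E => w - z) (ContinuousLinearMap.id ℝ E) x :=
    (hasFDerivAt_id x).sub_const z
  refine ((hf.add ((toDual ℝ E c).hasFDerivAt.comp x hsub)).add
    (hsub.norm_sq.const_mul (μ / 2))).congr_fderiv ?_
  ext v
  simp only [ContinuousLinearMap.comp_id, map_sub, add_apply, toDual_apply_apply, smul_apply,
    sub_apply, coe_innerSL_apply, nsmul_eq_mul, Nat.cast_ofNat, smul_eq_mul, map_add, map_smul,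
    add_right_inj]
  ring

end InnerProductSpace

theorem feddane_subproblem_weakly_convex_general {d : ℕ}
    (F : EuclideanSpace ℝ (Fin d) → ℝ) (hF : ContDiff ℝ 1 F)
    (w₀ g : EuclideanSpace ℝ (Fin d)) (lam μ : ℝ)
    (hweak : ConvexOn ℝ Set.univ fun w => F w + lam / 2 * ‖w‖ ^ 2)
    (P : EuclideanSpace ℝ (Fin d) → ℝ)
    (hP : P = fun w => F w + ⟪g - gradient F w₀, w - w₀⟫ + μ / 2 * ‖w - w₀‖ ^ 2) :
    StrongConvexOn Set.univ (μ - lam) P ∧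
      gradient P w₀ = g ∧
      ∀ wbar : EuclideanSpace ℝ (Fin d),
        (∀ w, P wbar ≤ P w) → (μ - lam) * ‖wbar - w₀‖ ≤ ‖g‖ := by
  have hconv : StrongConvexOn univ (μ - lam) P :=
    hP ▸ hweak.strongConvexOn_add_inner_sub_add_norm_sub_sq _ _
  have hPgrad (w) : HasGradientAt P (gradient F w + (g - gradient F w₀) + μ • (w - w₀)) w :=
    hP ▸ hasGradientAt_add_inner_sub_add_norm_sub_sq
      ((hF.differentiable one_ne_zero) w).hasGradientAt _ _ _
  have hPw₀ : HasGradientAt P g w₀ := by simpa using hPgrad w₀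
  refine ⟨hconv, hPw₀.gradient, fun wbar hmin => ?_⟩
  have hPwbar := hPgrad wbar
  rw [IsLocalMin.hasGradientAt_eq_zero (.of_forall hmin) hPwbar] at hPwbar
  simpa [norm_sub_rev] using hconv.mul_norm_sub_le_norm_sub_of_hasGradientAt hPw₀ hPwbar

/-- If `F` is `λ`-weakly convex (i.e. `w ↦ F w + (λ/2)‖w‖²` is convex)
and `μ > λ ≥ 0`, then the FedDANE subproblem
`P w = F w + ⟪g - ∇F w₀, w - w₀⟫ + (μ/2)‖w - w₀‖²` is `(μ - λ)`-strongly convex,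
`∇P w₀ = g`, and any minimizer `w̲` of `P` satisfies `(μ - λ)‖w̲ - w₀‖ ≤ ‖g‖`. -/
theorem feddane_subproblem_weakly_convex {d : ℕ}
    (F : EuclideanSpace ℝ (Fin d) → ℝ) (hF : ContDiff ℝ 1 F)
    (w₀ g : EuclideanSpace ℝ (Fin d)) (lam μ : ℝ) (hlam : 0 ≤ lam) (hμ : lam < μ)
    (hweak : ConvexOn ℝ Set.univ fun w => F w + lam / 2 * ‖w‖ ^ 2)
    (P : EuclideanSpace ℝ (Fin d) → ℝ)
    (hP : P = fun w => F w + ⟪g - gradient F w₀, w - w₀⟫ + μ / 2 * ‖w - w₀‖ ^ 2) :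
    StrongConvexOn Set.univ (μ - lam) P ∧
      gradient P w₀ = g ∧
      ∀ wbar : EuclideanSpace ℝ (Fin d),
        (∀ w, P wbar ≤ P w) → (μ - lam) * ‖wbar - w₀‖ ≤ ‖g‖ :=
  feddane_subproblem_weakly_convex_general F hF w₀ g lam μ hweak P hP
end

section
/- Fix a base point w₀ ∈ ℝ^d, a vector g ∈ ℝ^d, μ > 0 and γ ∈ [0,1). Suppose F_k is convex with L-Lipschitz gradient, and f also has L-Lipschitz gradient. Let w̲ be the exact minimizer of the FedDANE subproblem P_k(w) = F_k(w) + ⟨g − ∇F_k(w₀), w − w₀⟩ + (μ/2)‖w − w₀‖², and let w be a γ-inexact minimizer, i.e. ‖w − w̲‖ ≤ γ‖w̲ − w₀‖. Then f(w) ≤ f(w₀) − ⟨∇f(w₀), g⟩/μ + (L/(2μ²) + γ/(2μ)) (‖∇f(w₀)‖² + ‖g‖²) + (L(1+γ)²/(2μ²)) ‖g‖². -/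
/-!
Write `u = w̲ - w₀` and `e = ∇F_k(w̲) - ∇F_k(w₀)`. The first-order condition of the subproblem
reads `μ u = -(g + e)`, and convexity makes `∇F_k` monotone, so `⟪e, u⟫ ≥ 0` and hence
`μ ‖u‖ ≤ ‖g‖`. The descent lemma for `f` splits `⟪∇f(w₀), w - w₀⟫` into `⟪∇f(w₀), u⟫`, which is
`-⟪∇f(w₀), g⟫ / μ` up to an error of size `L ‖u‖ ‖∇f(w₀)‖`, and `⟪∇f(w₀), w - w̲⟫`, of size
`γ ‖u‖ ‖∇f(w₀)‖`; the quadratic term is controlled by `‖w - w₀‖ ≤ (1 + γ) ‖u‖`. Every bound is then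
in terms of `‖g‖ / μ`, and `ab ≤ (a² + b²) / 2` gives the stated form.
-/

open scoped RealInnerProductSpace

section InnerProductSpace

variable {E : Type*} [NormedAddCommGroup E] [InnerProductSpace ℝ E]

theorem mul_norm_le_of_smul_eq_neg_add {u g e : E} {μ : ℝ}
    (hu : μ • u = -(g + e)) (he : 0 ≤ ⟪e, u⟫) : μ * ‖u‖ ≤ ‖g‖ := by
  have hsq : μ * ‖u‖ ^ 2 ≤ ‖g‖ * ‖u‖ :=
    calc μ * ‖u‖ ^ 2 = ⟪μ • u, u⟫ := by rw [real_inner_smul_left, real_inner_self_eq_norm_sq]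
      _ = -⟪g, u⟫ - ⟪e, u⟫ := by rw [hu, inner_neg_left, inner_add_left]; ring
      _ ≤ ‖g‖ * ‖u‖ := by linarith [neg_le_of_abs_le (abs_real_inner_le_norm g u)]
  rcases (norm_nonneg u).eq_or_lt with hu0 | hu0
  · simp [← hu0]
  · nlinarith

theorem real_inner_le_of_norm_le_mul_norm {G v g : E} {s : ℝ} (hs : 0 ≤ s) (hv : ‖v‖ ≤ s * ‖g‖) :
    ⟪G, v⟫ ≤ s / 2 * (‖G‖ ^ 2 + ‖g‖ ^ 2) :=
  calc ⟪G, v⟫ ≤ ‖G‖ * ‖v‖ := real_inner_le_norm G v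
    _ ≤ ‖G‖ * (s * ‖g‖) := by gcongr
    _ ≤ s / 2 * (‖G‖ ^ 2 + ‖g‖ ^ 2) := by nlinarith [two_mul_le_add_sq ‖G‖ ‖g‖]

theorem real_inner_le_of_smul_eq_neg_add {G g u e : E} {μ L : ℝ} (hμ : 0 < μ) (hL : 0 ≤ L)
    (hu : μ • u = -(g + e)) (he : ‖e‖ ≤ L * ‖u‖) (hug : μ * ‖u‖ ≤ ‖g‖) :
    ⟪G, u⟫ ≤ -⟪G, g⟫ / μ + L / (2 * μ ^ 2) * (‖G‖ ^ 2 + ‖g‖ ^ 2) := by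
  have he' : ‖-e‖ ≤ L * μ⁻¹ * ‖g‖ := by
    rw [norm_neg, mul_assoc]
    exact he.trans (by gcongr; exact (le_inv_mul_iff₀ hμ).mpr hug)
  have hsplit : ⟪G, u⟫ = -⟪G, g⟫ / μ + ⟪G, -e⟫ / μ := by
    field_simp
    rw [mul_comm, ← real_inner_smul_right, hu, neg_add, inner_add_right, inner_neg_right]
  calc ⟪G, u⟫ = -⟪G, g⟫ / μ + ⟪G, -e⟫ / μ := hsplit
    _ ≤ -⟪G, g⟫ / μ + L * μ⁻¹ / 2 * (‖G‖ ^ 2 + ‖g‖ ^ 2) / μ := by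
        gcongr; exact real_inner_le_of_norm_le_mul_norm (by positivity) he'
    _ = -⟪G, g⟫ / μ + L / (2 * μ ^ 2) * (‖G‖ ^ 2 + ‖g‖ ^ 2) := by ring

theorem real_inner_add_norm_sq_le_of_smul_eq_neg_add {G g u e v : E} {μ γ L : ℝ} (hμ : 0 < μ)
    (hγ : 0 ≤ γ) (hL : 0 ≤ L) (hu : μ • u = -(g + e)) (he : ‖e‖ ≤ L * ‖u‖)
    (hug : μ * ‖u‖ ≤ ‖g‖) (hv : ‖v‖ ≤ γ * ‖u‖) :
    ⟪G, v + u⟫ + L / 2 * ‖v + u‖ ^ 2 ≤ -⟪G, g⟫ / μ +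
      (L / (2 * μ ^ 2) + γ / (2 * μ)) * (‖G‖ ^ 2 + ‖g‖ ^ 2) +
      L * (1 + γ) ^ 2 / (2 * μ ^ 2) * ‖g‖ ^ 2 := by
  have hug' : ‖u‖ ≤ μ⁻¹ * ‖g‖ := (le_inv_mul_iff₀ hμ).mpr hug
  have hexact := real_inner_le_of_smul_eq_neg_add (G := G) hμ hL hu he hug
  have hinexact : ⟪G, v⟫ ≤ γ / (2 * μ) * (‖G‖ ^ 2 + ‖g‖ ^ 2) := by
    have hv' : ‖v‖ ≤ γ * μ⁻¹ * ‖g‖ := by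
      rw [mul_assoc]; exact hv.trans (by gcongr)
    calc ⟪G, v⟫ ≤ γ * μ⁻¹ / 2 * (‖G‖ ^ 2 + ‖g‖ ^ 2) :=
          real_inner_le_of_norm_le_mul_norm (by positivity) hv'
      _ = γ / (2 * μ) * (‖G‖ ^ 2 + ‖g‖ ^ 2) := by ring
  have hquad : L / 2 * ‖v + u‖ ^ 2 ≤ L * (1 + γ) ^ 2 / (2 * μ ^ 2) * ‖g‖ ^ 2 := by
    have hvu : ‖v + u‖ ≤ (1 + γ) * (μ⁻¹ * ‖g‖) :=
      calc ‖v + u‖ ≤ ‖v‖ + ‖u‖ := norm_add_le v u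
        _ ≤ (1 + γ) * ‖u‖ := by linarith
        _ ≤ (1 + γ) * (μ⁻¹ * ‖g‖) := by gcongr
    calc L / 2 * ‖v + u‖ ^ 2 ≤ L / 2 * ((1 + γ) * (μ⁻¹ * ‖g‖)) ^ 2 := by gcongr
      _ = L * (1 + γ) ^ 2 / (2 * μ ^ 2) * ‖g‖ ^ 2 := by ring
  rw [inner_add_right]
  linear_combination hexact + hinexact + hquad

variable [CompleteSpace E] {φ : E → ℝ} {x y : E}

open AffineMap

theorem hasDerivAt_comp_lineMap {t : ℝ} (hφ : DifferentiableAt ℝ φ (lineMap x y t)) :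
    HasDerivAt (fun s ↦ φ (lineMap x y s)) ⟪gradient φ (lineMap x y t), y - x⟫ t := by
  have h := hφ.hasGradientAt.hasFDerivAt.comp_hasDerivAt t (hasDerivAt_lineMap (a := x) (b := y))
  rwa [InnerProductSpace.toDual_apply_apply] at h

theorem ConvexOn.inner_gradient_le_sub (hconv : ConvexOn ℝ Set.univ φ)
    (hφ : DifferentiableAt ℝ φ x) : ⟪gradient φ x, y - x⟫ ≤ φ y - φ x := by
  have hline : ConvexOn ℝ Set.univ (fun s ↦ φ (lineMap x y s)) :=
    hconv.comp_affineMap (lineMap x y)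
  have hderiv := hasDerivAt_comp_lineMap (x := x) (y := y) (t := 0) (by simpa using hφ)
  simpa [slope_def_field] using
    hline.le_slope_of_hasDerivAt (Set.mem_univ 0) (Set.mem_univ 1) one_pos hderiv

theorem ConvexOn.inner_gradient_sub_gradient_nonneg (hconv : ConvexOn ℝ Set.univ φ)
    (hx : DifferentiableAt ℝ φ x) (hy : DifferentiableAt ℝ φ y) :
    0 ≤ ⟪gradient φ y - gradient φ x, y - x⟫ := by
  have hxy := hconv.inner_gradient_le_sub (y := y) hx
  have hyx := hconv.inner_gradient_le_sub (y := x) hy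
  rw [← neg_sub y x, inner_neg_right] at hyx
  rw [inner_sub_left]
  linarith

theorem le_add_inner_gradient_add_norm_sq_of_lipschitz {L : ℝ} (hφ : Differentiable ℝ φ)
    (hlip : ∀ x y, ‖gradient φ x - gradient φ y‖ ≤ L * ‖x - y‖) :
    φ y ≤ φ x + ⟪gradient φ x, y - x⟫ + L / 2 * ‖y - x‖ ^ 2 := by
  set a := ⟪gradient φ x, y - x⟫
  set c := L * ‖y - x‖ ^ 2
  have hψ (t : ℝ) := hasDerivAt_comp_lineMap (x := x) (y := y) (t := t) (hφ _)
  have hB (t : ℝ) : HasDerivAt (fun s ↦ φ x + s * a + c / 2 * s ^ 2) (a + c * t) t := by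
    refine ((((hasDerivAt_id' t).mul_const a).const_add (φ x)).add
      ((hasDerivAt_pow 2 t).const_mul (c / 2))).congr_deriv ?_
    ring
  have hslope (t : ℝ) (ht : t ∈ Set.Ico (0 : ℝ) 1) :
      ⟪gradient φ (lineMap x y t), y - x⟫ ≤ a + c * t := by
    have hdist : ‖gradient φ (lineMap x y t) - gradient φ x‖ ≤ L * (t * ‖y - x‖) := by
      simpa [lineMap_apply_module', norm_smul, abs_of_nonneg ht.1] using
        hlip (lineMap x y t) x
    calc ⟪gradient φ (lineMap x y t), y - x⟫
        = a + ⟪gradient φ (lineMap x y t) - gradient φ x, y - x⟫ := by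
          rw [inner_sub_left]; ring
      _ ≤ a + ‖gradient φ (lineMap x y t) - gradient φ x‖ * ‖y - x‖ := by
          gcongr; exact real_inner_le_norm _ _
      _ ≤ a + L * (t * ‖y - x‖) * ‖y - x‖ := by gcongr
      _ = a + c * t := by ring
  have hcompare := image_le_of_deriv_right_le_deriv_boundary
    (fun t _ ↦ (hψ t).continuousAt.continuousWithinAt) (fun t _ ↦ (hψ t).hasDerivWithinAt)
    (by simp) (fun t _ ↦ (hB t).continuousAt.continuousWithinAt)
    (fun t _ ↦ (hB t).hasDerivWithinAt) hslope (Set.right_mem_Icc.mpr zero_le_one)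
  simp only [lineMap_apply_one, one_mul, one_pow] at hcompare
  linarith

theorem IsLocalMin.gradient_add_add_smul_eq_zero {c x₀ : E} {μ : ℝ}
    (hφ : DifferentiableAt ℝ φ x)
    (hmin : IsLocalMin (fun w ↦ φ w + ⟪c, w - x₀⟫ + μ / 2 * ‖w - x₀‖ ^ 2) x) :
    gradient φ x + c + μ • (x - x₀) = 0 := by
  have hshift : HasFDerivAt (fun w : E ↦ w - x₀) (ContinuousLinearMap.id ℝ E) x :=
    (hasFDerivAt_id x).sub_const x₀
  have hderiv := (hφ.hasGradientAt.hasFDerivAt.add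
    ((innerSL ℝ c).hasFDerivAt.comp x hshift)).add (hshift.norm_sq.const_mul (μ / 2))
  have hderiv' : HasFDerivAt (fun w ↦ φ w + ⟪c, w - x₀⟫ + μ / 2 * ‖w - x₀‖ ^ 2)
      (InnerProductSpace.toDual ℝ E (gradient φ x + c + μ • (x - x₀))) x := by
    refine hderiv.congr_fderiv ?_
    ext v
    simp only [toDual_gradient, ContinuousLinearMap.comp_id, map_sub, map_add, map_smul,
      add_apply, smul_apply, sub_apply,
      coe_innerSL_apply, nsmul_eq_mul, Nat.cast_ofNat, smul_eq_mul,
      InnerProductSpace.toDual_apply_apply, add_right_inj]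
    ring
  exact (InnerProductSpace.toDual ℝ E).map_eq_zero_iff.mp (hmin.hasFDerivAt_eq_zero hderiv')

end InnerProductSpace

theorem feddane_inexact_descent_convex_general {d N : ℕ}
    (F : Fin N → EuclideanSpace ℝ (Fin d) → ℝ) (hF : ∀ k, ContDiff ℝ 1 (F k))
    (p : Fin N → ℝ)
    (f : EuclideanSpace ℝ (Fin d) → ℝ) (hf : f = fun w => ∑ k, p k * F k w)
    (w₀ g : EuclideanSpace ℝ (Fin d)) (μ γ L : ℝ)
    (hμ : 0 < μ) (hγ0 : 0 ≤ γ) (hL : 0 ≤ L)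
    (k : Fin N) (hconv : ConvexOn ℝ Set.univ (F k))
    (hFlip : ∀ x y, ‖gradient (F k) x - gradient (F k) y‖ ≤ L * ‖x - y‖)
    (hflip : ∀ x y, ‖gradient f x - gradient f y‖ ≤ L * ‖x - y‖)
    (P : EuclideanSpace ℝ (Fin d) → ℝ)
    (hP : P = fun w =>
      F k w + ⟪g - gradient (F k) w₀, w - w₀⟫ + μ / 2 * ‖w - w₀‖ ^ 2)
    (wbar w : EuclideanSpace ℝ (Fin d))
    (hmin : ∀ v, P wbar ≤ P v)
    (hinexact : ‖w - wbar‖ ≤ γ * ‖wbar - w₀‖) :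
    f w ≤ f w₀ - ⟪gradient f w₀, g⟫ / μ +
        (L / (2 * μ ^ 2) + γ / (2 * μ)) * (‖gradient f w₀‖ ^ 2 + ‖g‖ ^ 2) +
        L * (1 + γ) ^ 2 / (2 * μ ^ 2) * ‖g‖ ^ 2 := by
  have hFk : Differentiable ℝ (F k) := (hF k).differentiable one_ne_zero
  have hfd : Differentiable ℝ f := hf ▸ Differentiable.fun_sum fun i _ ↦
    ((hF i).differentiable one_ne_zero).const_mul (p i)
  have hopt : μ • (wbar - w₀) = -(g + (gradient (F k) wbar - gradient (F k) w₀)) := by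
    subst hP
    refine eq_neg_of_add_eq_zero_left ?_
    rw [← IsLocalMin.gradient_add_add_smul_eq_zero (hFk wbar) (.of_forall hmin)]
    module
  have hmono := hconv.inner_gradient_sub_gradient_nonneg (hFk w₀) (hFk wbar)
  have hstep := real_inner_add_norm_sq_le_of_smul_eq_neg_add (G := gradient f w₀) hμ hγ0 hL hopt
    (hFlip wbar w₀) (mul_norm_le_of_smul_eq_neg_add hopt hmono) hinexact
  rw [sub_add_sub_cancel] at hstep
  linear_combination le_add_inner_gradient_add_norm_sq_of_lipschitz (x := w₀) (y := w) hfd hflip +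
    hstep

/-- One-device inexact descent bound (convex case).  If `F k` is
convex with `L`-Lipschitz gradient, `f = ∑ k, p k * F k` also has `L`-Lipschitz
gradient, `w̲` is the exact minimizer of the FedDANE subproblem
`P w = F k w + ⟪g - ∇F_k(w₀), w - w₀⟫ + (μ/2)‖w - w₀‖²`, and `w` is a `γ`-inexact
minimizer (`‖w - w̲‖ ≤ γ ‖w̲ - w₀‖`), then
`f(w) ≤ f(w₀) - ⟪∇f(w₀), g⟫/μ + (L/(2μ²) + γ/(2μ))(‖∇f(w₀)‖² + ‖g‖²)
        + (L(1+γ)²/(2μ²))‖g‖²`. -/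
theorem feddane_inexact_descent_convex {d N : ℕ}
    (F : Fin N → EuclideanSpace ℝ (Fin d) → ℝ) (hF : ∀ k, ContDiff ℝ 1 (F k))
    (p : Fin N → ℝ) (hp : ∀ k, 0 ≤ p k) (hpsum : ∑ k, p k = 1)
    (f : EuclideanSpace ℝ (Fin d) → ℝ) (hf : f = fun w => ∑ k, p k * F k w)
    (w₀ g : EuclideanSpace ℝ (Fin d)) (μ γ L : ℝ)
    (hμ : 0 < μ) (hγ0 : 0 ≤ γ) (hγ1 : γ < 1) (hL : 0 ≤ L)
    (k : Fin N) (hconv : ConvexOn ℝ Set.univ (F k))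
    (hFlip : ∀ x y, ‖gradient (F k) x - gradient (F k) y‖ ≤ L * ‖x - y‖)
    (hflip : ∀ x y, ‖gradient f x - gradient f y‖ ≤ L * ‖x - y‖)
    (P : EuclideanSpace ℝ (Fin d) → ℝ)
    (hP : P = fun w =>
      F k w + ⟪g - gradient (F k) w₀, w - w₀⟫ + μ / 2 * ‖w - w₀‖ ^ 2)
    (wbar w : EuclideanSpace ℝ (Fin d))
    (hmin : ∀ v, P wbar ≤ P v)
    (hinexact : ‖w - wbar‖ ≤ γ * ‖wbar - w₀‖) :
    f w ≤ f w₀ - ⟪gradient f w₀, g⟫ / μ +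
        (L / (2 * μ ^ 2) + γ / (2 * μ)) * (‖gradient f w₀‖ ^ 2 + ‖g‖ ^ 2) +
        L * (1 + γ) ^ 2 / (2 * μ ^ 2) * ‖g‖ ^ 2 :=
  feddane_inexact_descent_convex_general F hF p f hf w₀ g μ γ L hμ hγ0 hL k hconv hFlip hflip P hP
    wbar w hmin hinexact
end

section
/- Fix a base point w₀ ∈ ℝ^d, a vector g ∈ ℝ^d, constants λ ≥ 0, μ > λ and γ ∈ [0,1). Suppose F_k has L-Lipschitz gradient and is λ-weakly convex (w ↦ F_k(w) + (λ/2)‖w‖² is convex), and f has L-Lipschitz gradient. Let w̲ be the exact minimizer of the FedDANE subproblem P_k(w) = F_k(w) + ⟨g − ∇F_k(w₀), w − w₀⟩ + (μ/2)‖w − w₀‖², and let w be a γ-inexact minimizer, i.e. ‖w − w̲‖ ≤ γ‖w̲ − w₀‖. Then f(w) ≤ f(w₀) − ⟨∇f(w₀), g⟩/μ + (L/(2μ(μ−λ)) + γ/(2(μ−λ))) (‖∇f(w₀)‖² + ‖g‖²) + (L(1+γ)²/(2(μ−λ)²)) ‖g‖². -/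
/-!
Stationarity of the exact minimizer `w̲` of the FedDANE subproblem reads
`μ (w̲ - w₀) = ∇F_k(w₀) - ∇F_k(w̲) - g`. Pairing it with `w̲ - w₀` and using that weak convexity
makes `∇F_k` `λ`-hypomonotone bounds the exact step: `(μ - λ) ‖w̲ - w₀‖ ≤ ‖g‖`. Pairing it with
`∇f(w₀)` and using the Lipschitz bound on `∇F_k` controls the first-order term of the descent lemma
for `f` at `w₀`; the inexactness `‖w - w̲‖ ≤ γ ‖w̲ - w₀‖` and `2ab ≤ a² + b²` do the rest.
-/

open scoped RealInnerProductSpace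
open Set

section InnerProduct

variable {E : Type*} [NormedAddCommGroup E] [InnerProductSpace ℝ E]

theorem mul_norm_le_of_smul_eq_sub {μ lam : ℝ} {u v g : E} (h : μ • u = v - g)
    (hv : ⟪v, u⟫ ≤ lam * ‖u‖ ^ 2) : (μ - lam) * ‖u‖ ≤ ‖g‖ := by
  have hsq : μ * ‖u‖ ^ 2 ≤ lam * ‖u‖ ^ 2 + ‖g‖ * ‖u‖ := by
    have := congrArg (fun z => ⟪z, u⟫) h
    simp only [real_inner_smul_left, real_inner_self_eq_norm_sq, inner_sub_left] at this
    linarith [neg_le_of_abs_le (abs_real_inner_le_norm g u)]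
  rcases (norm_nonneg u).eq_or_lt with hu | hu
  · rw [← hu, mul_zero]
    exact norm_nonneg g
  · exact le_of_mul_le_mul_right (by linarith) hu

theorem inner_sub_le_of_smul_eq_sub {μ L γ : ℝ} (hμ : 0 < μ) {w₀ wbar w v g : E} (a : E)
    (h : μ • (wbar - w₀) = v - g) (hv : ‖v‖ ≤ L * ‖wbar - w₀‖)
    (hw : ‖w - wbar‖ ≤ γ * ‖wbar - w₀‖) :
    ⟪a, w - w₀⟫ ≤ (L / μ + γ) * (‖a‖ * ‖wbar - w₀‖) - ⟪a, g⟫ / μ := by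
  have hexact : ⟪a, wbar - w₀⟫ ≤ (‖a‖ * (L * ‖wbar - w₀‖) - ⟪a, g⟫) / μ := by
    rw [le_div_iff₀ hμ, mul_comm, ← real_inner_smul_right, h, inner_sub_right]
    gcongr
    exact (real_inner_le_norm a v).trans (by gcongr)
  have hinexact : ⟪a, w - wbar⟫ ≤ ‖a‖ * (γ * ‖wbar - w₀‖) :=
    (real_inner_le_norm a _).trans (by gcongr)
  calc ⟪a, w - w₀⟫ = ⟪a, wbar - w₀⟫ + ⟪a, w - wbar⟫ := by
        rw [← inner_add_right, sub_add_sub_cancel']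
    _ ≤ (‖a‖ * (L * ‖wbar - w₀‖) - ⟪a, g⟫) / μ + ‖a‖ * (γ * ‖wbar - w₀‖) :=
        add_le_add hexact hinexact
    _ = (L / μ + γ) * (‖a‖ * ‖wbar - w₀‖) - ⟪a, g⟫ / μ := by
        field_simp
        ring

end InnerProduct

section Gradient

variable {E : Type*} [NormedAddCommGroup E] [InnerProductSpace ℝ E] [CompleteSpace E]
  {f g : E → ℝ} {f' g' x : E}

theorem HasGradientAt.add (hf : HasGradientAt f f' x) (hg : HasGradientAt g g' x) :
    HasGradientAt (fun w => f w + g w) (f' + g') x := by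
  rw [hasGradientAt_iff_hasFDerivAt, map_add]
  exact hf.hasFDerivAt.add hg.hasFDerivAt

theorem hasGradientAt_inner_sub (a z : E) : HasGradientAt (fun w => ⟪a, w - z⟫) a x := by
  rw [hasGradientAt_iff_hasFDerivAt]
  exact (innerSL ℝ a).hasFDerivAt.comp x ((hasFDerivAt_id x).sub_const z)

theorem hasGradientAt_half_mul_norm_sub_sq (c : ℝ) (z : E) :
    HasGradientAt (fun w => c / 2 * ‖w - z‖ ^ 2) (c • (x - z)) x := by
  rw [hasGradientAt_iff_hasFDerivAt]
  refine (((hasFDerivAt_id x).sub_const z).norm_sq.const_mul (c / 2)).congr_fderiv ?_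
  ext v
  simp only [id_eq, map_sub, ContinuousLinearMap.comp_id, smul_apply,
    sub_apply, coe_innerSL_apply, nsmul_eq_mul, Nat.cast_ofNat, smul_eq_mul,
    map_smul, InnerProductSpace.toDual_apply_apply]
  ring

theorem IsLocalMin.hasGradientAt_eq_zero_s5 (h : IsLocalMin f x) (hf : HasGradientAt f f' x) :
    f' = 0 :=
  (InnerProductSpace.toDual ℝ E).injective <| by
    rw [map_zero]
    exact h.hasFDerivAt_eq_zero hf.hasFDerivAt

theorem HasGradientAt.hasDerivAt_add_smul {v : E} {t : ℝ} (hf : HasGradientAt f f' (x + t • v)) :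
    HasDerivAt (fun s : ℝ => f (x + s • v)) ⟪f', v⟫ t := by
  have hline : HasDerivAt (fun s : ℝ => x + s • v) v t := by
    simpa using ((hasDerivAt_id t).smul_const v).const_add x
  exact hf.hasFDerivAt.comp_hasDerivAt t hline

theorem ConvexOn.add_inner_le_of_hasGradientAt {s : Set E} {y : E} (hconv : ConvexOn ℝ s f)
    (hx : x ∈ s) (hy : y ∈ s) (hf : HasGradientAt f f' x) : f x + ⟪f', y - x⟫ ≤ f y := by
  have hline : f ∘ AffineMap.lineMap x y = fun t : ℝ => f (x + t • (y - x)) := by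
    ext t
    simp [AffineMap.lineMap_apply_module', add_comm]
  have hd : HasDerivAt (fun t : ℝ => f (x + t • (y - x))) ⟪f', y - x⟫ 0 :=
    HasGradientAt.hasDerivAt_add_smul (by simpa using hf)
  have := (hconv.comp_affineMap (AffineMap.lineMap x y)).le_slope_of_hasDerivAt (x := 0) (y := 1)
    (by simpa using hx) (by simpa using hy) zero_lt_one (hline ▸ hd)
  simp only [slope_def_field, Function.comp_apply, AffineMap.lineMap_apply_one,
    AffineMap.lineMap_apply_zero, sub_zero, div_one] at this
  linarith

theorem inner_sub_le_of_convexOn_add_sq {lam : ℝ} {y : E}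
    (hconv : ConvexOn ℝ univ fun w => f w + lam / 2 * ‖w‖ ^ 2)
    (hx : HasGradientAt f f' x) (hy : HasGradientAt f g' y) :
    ⟪f' - g', y - x⟫ ≤ lam * ‖y - x‖ ^ 2 := by
  have hgrad {z z' : E} (hz : HasGradientAt f z' z) :
      HasGradientAt (fun w => f w + lam / 2 * ‖w‖ ^ 2) (z' + lam • z) z := by
    simpa using hz.add (hasGradientAt_half_mul_norm_sub_sq lam 0)
  have hxy := hconv.add_inner_le_of_hasGradientAt (mem_univ x) (mem_univ y) (hgrad hx)
  have hyx := hconv.add_inner_le_of_hasGradientAt (mem_univ y) (mem_univ x) (hgrad hy)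
  have hsum : ⟪f' + lam • x, y - x⟫ + ⟪g' + lam • y, x - y⟫ =
      ⟪f' - g', y - x⟫ - lam * ‖y - x‖ ^ 2 := by
    rw [← neg_sub y x, inner_neg_right, ← sub_eq_add_neg, ← inner_sub_left,
      show f' + lam • x - (g' + lam • y) = (f' - g') - lam • (y - x) by module,
      inner_sub_left, real_inner_smul_left, real_inner_self_eq_norm_sq]
  linarith

theorem le_add_inner_add_sq_of_lipschitz_gradient {f' : E → E} (hf : ∀ x, HasGradientAt f (f' x) x)
    {L : ℝ} (hL : ∀ x y, ‖f' x - f' y‖ ≤ L * ‖x - y‖) (x y : E) :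
    f y ≤ f x + ⟪f' x, y - x⟫ + L / 2 * ‖y - x‖ ^ 2 := by
  set v := y - x
  have hderiv (t : ℝ) : HasDerivAt (fun t : ℝ => f (x + t • v)) ⟪f' (x + t • v), v⟫ t :=
    (hf _).hasDerivAt_add_smul
  have hbound (t : ℝ) (ht : 0 ≤ t) : ⟪f' (x + t • v), v⟫ ≤ ⟪f' x, v⟫ + L * t * ‖v‖ ^ 2 := by
    have := (real_inner_le_norm (f' (x + t • v) - f' x) v).trans
      (mul_le_mul_of_nonneg_right (hL (x + t • v) x) (norm_nonneg v))
    rw [inner_sub_left, add_sub_cancel_left, norm_smul, Real.norm_of_nonneg ht] at this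
    linarith
  have hB (t : ℝ) : HasDerivAt (fun t : ℝ => f x + t * ⟪f' x, v⟫ + L / 2 * t ^ 2 * ‖v‖ ^ 2)
      (⟪f' x, v⟫ + L * t * ‖v‖ ^ 2) t := by
    refine ((((hasDerivAt_id t).mul_const ⟪f' x, v⟫).const_add (f x)).add
      (((hasDerivAt_pow 2 t).const_mul (L / 2)).mul_const (‖v‖ ^ 2))).congr_deriv ?_
    rw [Nat.cast_ofNat, pow_one, one_mul]
    ring
  have := image_le_of_deriv_right_le_deriv_boundary (a := 0) (b := 1)
    (fun t _ => (hderiv t).continuousAt.continuousWithinAt) (fun t _ => (hderiv t).hasDerivWithinAt)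
    (by simp) (fun t _ => (hB t).continuousAt.continuousWithinAt)
    (fun t _ => (hB t).hasDerivWithinAt) (fun t ht => hbound t ht.1) (right_mem_Icc.2 zero_le_one)
  simpa [v] using this

end Gradient

theorem feddane_coefficient_bound {a b r s L μ ν γ : ℝ} (ha : 0 ≤ a) (hs : 0 ≤ s)
    (hL : 0 ≤ L) (hγ : 0 ≤ γ) (hμ : 0 < μ) (hν : 0 < ν) (hrb : ν * r ≤ b) (hsr : s ≤ (1 + γ) * r) :
    (L / μ + γ) * (a * r) + L / 2 * s ^ 2 ≤
      (L / (2 * μ * ν) + γ / (2 * ν)) * (a ^ 2 + b ^ 2) + L * (1 + γ) ^ 2 / (2 * ν ^ 2) * b ^ 2 := by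
  have har : a * r ≤ (a ^ 2 + b ^ 2) / (2 * ν) := by
    rw [le_div_iff₀ (by positivity)]
    nlinarith [mul_le_mul_of_nonneg_left hrb ha, sq_nonneg (a - b)]
  have hsb : s ^ 2 ≤ (1 + γ) ^ 2 * b ^ 2 / ν ^ 2 := by
    have hsν : s * ν ≤ (1 + γ) * b :=
      calc s * ν ≤ (1 + γ) * r * ν := by gcongr
        _ ≤ (1 + γ) * b := by nlinarith
    rw [le_div_iff₀ (by positivity), ← mul_pow, ← mul_pow]
    exact pow_le_pow_left₀ (by positivity) hsν 2
  calc (L / μ + γ) * (a * r) + L / 2 * s ^ 2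
      ≤ (L / μ + γ) * ((a ^ 2 + b ^ 2) / (2 * ν)) + L / 2 * ((1 + γ) ^ 2 * b ^ 2 / ν ^ 2) := by
        gcongr
    _ = _ := by field_simp

theorem feddane_inexact_descent_nonconvex_general {d N : ℕ}
    (F : Fin N → EuclideanSpace ℝ (Fin d) → ℝ) (hF : ∀ k, ContDiff ℝ 1 (F k))
    (p : Fin N → ℝ)
    (f : EuclideanSpace ℝ (Fin d) → ℝ) (hf : f = fun w => ∑ k, p k * F k w)
    (w₀ g : EuclideanSpace ℝ (Fin d)) (lam μ γ L : ℝ)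
    (hlam : 0 ≤ lam) (hμ : lam < μ) (hγ0 : 0 ≤ γ) (hL : 0 ≤ L)
    (k : Fin N)
    (hweak : ConvexOn ℝ Set.univ fun w => F k w + lam / 2 * ‖w‖ ^ 2)
    (hFlip : ∀ x y, ‖gradient (F k) x - gradient (F k) y‖ ≤ L * ‖x - y‖)
    (hflip : ∀ x y, ‖gradient f x - gradient f y‖ ≤ L * ‖x - y‖)
    (P : EuclideanSpace ℝ (Fin d) → ℝ)
    (hP : P = fun w =>
      F k w + ⟪g - gradient (F k) w₀, w - w₀⟫ + μ / 2 * ‖w - w₀‖ ^ 2)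
    (wbar w : EuclideanSpace ℝ (Fin d))
    (hmin : ∀ v, P wbar ≤ P v)
    (hinexact : ‖w - wbar‖ ≤ γ * ‖wbar - w₀‖) :
    f w ≤ f w₀ - ⟪gradient f w₀, g⟫ / μ +
        (L / (2 * μ * (μ - lam)) + γ / (2 * (μ - lam))) *
          (‖gradient f w₀‖ ^ 2 + ‖g‖ ^ 2) +
        L * (1 + γ) ^ 2 / (2 * (μ - lam) ^ 2) * ‖g‖ ^ 2 := by
  have hμ0 : 0 < μ := hlam.trans_lt hμ
  have hdiff := fun i => (hF i).differentiable one_ne_zero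
  have hFk (x) : HasGradientAt (F k) (gradient (F k) x) x := (hdiff k x).hasGradientAt
  have hfd (x) : HasGradientAt f (gradient f x) x := by
    have : Differentiable ℝ f := hf ▸ by fun_prop
    exact (this x).hasGradientAt
  have hstat : μ • (wbar - w₀) = (gradient (F k) w₀ - gradient (F k) wbar) - g := by
    have hPgrad : HasGradientAt P
        (gradient (F k) wbar + (g - gradient (F k) w₀) + μ • (wbar - w₀)) wbar :=
      hP ▸ ((hFk wbar).add (hasGradientAt_inner_sub _ _)).add
        (hasGradientAt_half_mul_norm_sub_sq _ _)
    linear_combination (norm := module)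
      IsLocalMin.hasGradientAt_eq_zero_s5 (.of_forall hmin) hPgrad
  have hstep : (μ - lam) * ‖wbar - w₀‖ ≤ ‖g‖ :=
    mul_norm_le_of_smul_eq_sub hstat (inner_sub_le_of_convexOn_add_sq hweak (hFk w₀) (hFk wbar))
  have hfirst := inner_sub_le_of_smul_eq_sub hμ0 (gradient f w₀) hstat
    (by simpa only [norm_sub_rev w₀] using hFlip w₀ wbar) hinexact
  have hdist : ‖w - w₀‖ ≤ (1 + γ) * ‖wbar - w₀‖ := by
    linarith [norm_sub_le_norm_sub_add_norm_sub w wbar w₀]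
  have hcoef := feddane_coefficient_bound (norm_nonneg (gradient f w₀)) (norm_nonneg _) hL hγ0
    hμ0 (sub_pos.mpr hμ) hstep hdist
  linarith [le_add_inner_add_sq_of_lipschitz_gradient hfd hflip w₀ w]

/-- One-device inexact descent bound (non-convex case).  If `F k`
has `L`-Lipschitz gradient and is `λ`-weakly convex (`w ↦ F k w + (λ/2)‖w‖²` is
convex), `μ > λ ≥ 0`, `f` has `L`-Lipschitz gradient, `w̲` is the exact minimizer of
the FedDANE subproblem, and `w` is a `γ`-inexact minimizer, then
`f(w) ≤ f(w₀) - ⟪∇f(w₀), g⟫/μ + (L/(2μ(μ-λ)) + γ/(2(μ-λ)))(‖∇f(w₀)‖² + ‖g‖²)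
        + (L(1+γ)²/(2(μ-λ)²))‖g‖²`. -/
theorem feddane_inexact_descent_nonconvex {d N : ℕ}
    (F : Fin N → EuclideanSpace ℝ (Fin d) → ℝ) (hF : ∀ k, ContDiff ℝ 1 (F k))
    (p : Fin N → ℝ) (hp : ∀ k, 0 ≤ p k) (hpsum : ∑ k, p k = 1)
    (f : EuclideanSpace ℝ (Fin d) → ℝ) (hf : f = fun w => ∑ k, p k * F k w)
    (w₀ g : EuclideanSpace ℝ (Fin d)) (lam μ γ L : ℝ)
    (hlam : 0 ≤ lam) (hμ : lam < μ) (hγ0 : 0 ≤ γ) (hγ1 : γ < 1) (hL : 0 ≤ L)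
    (k : Fin N)
    (hweak : ConvexOn ℝ Set.univ fun w => F k w + lam / 2 * ‖w‖ ^ 2)
    (hFlip : ∀ x y, ‖gradient (F k) x - gradient (F k) y‖ ≤ L * ‖x - y‖)
    (hflip : ∀ x y, ‖gradient f x - gradient f y‖ ≤ L * ‖x - y‖)
    (P : EuclideanSpace ℝ (Fin d) → ℝ)
    (hP : P = fun w =>
      F k w + ⟪g - gradient (F k) w₀, w - w₀⟫ + μ / 2 * ‖w - w₀‖ ^ 2)
    (wbar w : EuclideanSpace ℝ (Fin d))
    (hmin : ∀ v, P wbar ≤ P v)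
    (hinexact : ‖w - wbar‖ ≤ γ * ‖wbar - w₀‖) :
    f w ≤ f w₀ - ⟪gradient f w₀, g⟫ / μ +
        (L / (2 * μ * (μ - lam)) + γ / (2 * (μ - lam))) *
          (‖gradient f w₀‖ ^ 2 + ‖g‖ ^ 2) +
        L * (1 + γ) ^ 2 / (2 * (μ - lam) ^ 2) * ‖g‖ ^ 2 :=
  feddane_inexact_descent_nonconvex_general F hF p f hf w₀ g lam μ γ L hlam hμ hγ0 hL k hweak hFlip
    hflip P hP wbar w hmin hinexact
end

section
/- Fix a base point w₀ ∈ ℝ^d, constants λ ≥ 0, μ > λ and γ ∈ [0,1). Suppose each F_k has L-Lipschitz gradient and is λ-weakly convex (w ↦ F_k(w) + (λ/2)‖w‖² is convex), and f has L-Lipschitz gradient. Let g be a random vector in ℝ^d with E[g] = ∇f(w₀), and for each device k and each realization of g let w_k(g) be a γ-inexact minimizer of the FedDANE subproblem P_k with base point w₀, gradient estimate g and penalty μ. Then Σ_{k=1}^N p_k E[f(w_k(g))] ≤ f(w₀) − (1/μ − 3γ/(2(μ−λ))) ‖∇f(w₀)‖² + (L(1+γ)²/(μ−λ)² + 3L/(2μ(μ−λ)))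 ‖∇f(w₀)‖² + (L(1+γ)²/(μ−λ)² + L/(μ(μ−λ)) + γ/(μ−λ)) E[‖g − ∇f(w₀)‖²]. -/
/-!
Write `δ = w̄ - w₀` for the exact FedDANE step. Stationarity of the subproblem gives
`μ δ = -(∇F_k(w̄) - ∇F_k(w₀) + g)`, and `λ`-weak convexity makes `∇F_k + λ id` monotone, so
`(μ - λ) ‖δ‖ ≤ ‖g‖`. The descent lemma for `f` at `w₀`, with `w - w₀ = (w - w̄) + δ`, the inexactness
`‖w - w̄‖ ≤ γ ‖δ‖` and the `L`-Lipschitz gradient of `F_k`, bounds `f(w)` by a quadratic in `g`.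
Centring that quadratic at `∇f(w₀) = E[g]` leaves a cross term `⟪∇f(w₀), g - ∇f(w₀)⟫` of mean zero,
so averaging over devices and realizations gives the bound.
-/

open scoped RealInnerProductSpace
open MeasureTheory

theorem ConvexOn.add_fderiv_sub_le {E : Type*} [NormedAddCommGroup E] [NormedSpace ℝ E]
    {φ : E → ℝ} {φ' : E →L[ℝ] ℝ} {x : E} (hφ : ConvexOn ℝ Set.univ φ)
    (hφ' : HasFDerivAt φ φ' x) (y : E) :
    φ x + φ' (y - x) ≤ φ y := by
  have hline : ConvexOn ℝ Set.univ (φ ∘ (AffineMap.lineMap x y : ℝ →ᵃ[ℝ] E)) := by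
    simpa using hφ.comp_affineMap (AffineMap.lineMap (k := ℝ) x y)
  have hderiv : HasDerivAt (φ ∘ (AffineMap.lineMap x y : ℝ →ᵃ[ℝ] E)) (φ' (y - x)) 0 := by
    have hφ₀ : HasFDerivAt φ φ' (AffineMap.lineMap x y (0 : ℝ)) := by simpa using hφ'
    exact hφ₀.comp_hasDerivAt 0 AffineMap.hasDerivAt_lineMap
  have hslope :=
    hline.le_slope_of_hasDerivAt (Set.mem_univ 0) (Set.mem_univ 1) zero_lt_one hderiv
  simp only [slope_def_field, Function.comp_apply, AffineMap.lineMap_apply_zero,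
    AffineMap.lineMap_apply_one, sub_zero, div_one] at hslope
  linarith

section InnerProductSpace

open InnerProductSpace

variable {E : Type*} [NormedAddCommGroup E] [InnerProductSpace ℝ E]

theorem le_centered_quadratic (G v : E) {C₁ : ℝ} (C₂ μ : ℝ) (hC₁ : 0 ≤ C₁) :
    C₁ * (‖G‖ * ‖v‖) - ⟪G, v⟫ / μ + C₂ * ‖v‖ ^ 2 ≤
      (3 / 2 * C₁ + C₂ - 1 / μ) * ‖G‖ ^ 2 + (2 * C₂ - 1 / μ) * ⟪G, v - G⟫ +
        (C₁ / 2 + C₂) * ‖v - G‖ ^ 2 := by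
  have hv : v = G + (v - G) := by abel
  have hinner : ⟪G, v⟫ = ‖G‖ ^ 2 + ⟪G, v - G⟫ := by
    conv_lhs => rw [hv]
    rw [inner_add_right, real_inner_self_eq_norm_sq]
  have hsq : ‖v‖ ^ 2 = ‖G‖ ^ 2 + 2 * ⟪G, v - G⟫ + ‖v - G‖ ^ 2 := by
    conv_lhs => rw [hv]
    exact norm_add_sq_real G (v - G)
  have hcross : ‖G‖ * ‖v‖ ≤ 3 / 2 * ‖G‖ ^ 2 + 1 / 2 * ‖v - G‖ ^ 2 := by
    nlinarith [norm_le_insert' v G, two_mul_le_add_sq ‖G‖ ‖v - G‖, norm_nonneg G]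
  rw [hinner, hsq]
  linear_combination mul_le_mul_of_nonneg_left hcross hC₁

variable [CompleteSpace E]

theorem sum_mul_integral_le_of_le_centered {ι Ω : Type*} [Fintype ι] [MeasurableSpace Ω]
    {ℙ : Measure Ω} [IsProbabilityMeasure ℙ] {p : ι → ℝ} {X : ι → Ω → ℝ} {g : Ω → E} {G : E}
    {a b c : ℝ} (hp : ∀ k, 0 ≤ p k) (hpsum : ∑ k, p k = 1) (hX : ∀ k, Integrable (X k) ℙ)
    (hg : Integrable g ℙ) (hmean : ∫ ω, g ω ∂ℙ = G)
    (hvar : Integrable (fun ω => ‖g ω - G‖ ^ 2) ℙ)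
    (hle : ∀ k ω, X k ω ≤ a + b * ⟪G, g ω - G⟫ + c * ‖g ω - G‖ ^ 2) :
    ∑ k, p k * ∫ ω, X k ω ∂ℙ ≤ a + c * ∫ ω, ‖g ω - G‖ ^ 2 ∂ℙ := by
  have hcentered : Integrable (fun ω => g ω - G) ℙ := hg.sub (integrable_const G)
  have hcross : Integrable (fun ω => ⟪G, g ω - G⟫) ℙ := hcentered.const_inner G
  have hcross_mean : ∫ ω, ⟪G, g ω - G⟫ ∂ℙ = 0 := by
    rw [integral_inner hcentered, integral_sub hg (integrable_const G), hmean, integral_const,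
      probReal_univ, one_smul, sub_self, inner_zero_right]
  have hlin_int : Integrable (fun ω => a + b * ⟪G, g ω - G⟫) ℙ :=
    (integrable_const a).add (hcross.const_mul b)
  have hbound_int : Integrable (fun ω => a + b * ⟪G, g ω - G⟫ + c * ‖g ω - G‖ ^ 2) ℙ :=
    hlin_int.add (hvar.const_mul c)
  have hbound_mean :
      ∫ ω, (a + b * ⟪G, g ω - G⟫ + c * ‖g ω - G‖ ^ 2) ∂ℙ = a + c * ∫ ω, ‖g ω - G‖ ^ 2 ∂ℙ := by
    rw [integral_add hlin_int (hvar.const_mul c), integral_add (integrable_const a)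
      (hcross.const_mul b), integral_const_mul, integral_const_mul, hcross_mean,
      integral_const, probReal_univ, one_smul, mul_zero, add_zero]
  calc ∑ k, p k * ∫ ω, X k ω ∂ℙ
      ≤ ∑ k, p k * ∫ ω, (a + b * ⟪G, g ω - G⟫ + c * ‖g ω - G‖ ^ 2) ∂ℙ :=
        Finset.sum_le_sum fun k _ =>
          mul_le_mul_of_nonneg_left (integral_mono (hX k) hbound_int (hle k)) (hp k)
    _ = a + c * ∫ ω, ‖g ω - G‖ ^ 2 ∂ℙ := by rw [← Finset.sum_mul, hpsum, one_mul, hbound_mean]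

theorem IsLocalMin.hasGradientAt_eq_zero_s7 {φ : E → ℝ} {a g : E} (h : IsLocalMin φ a)
    (hg : HasGradientAt φ g a) : g = 0 :=
  (toDual ℝ E).map_eq_zero_iff.1 (h.hasFDerivAt_eq_zero hg.hasFDerivAt)

theorem HasGradientAt.add_inner_add_mul_norm_sq {φ : E → ℝ} {g c w₀ b : E} (μ : ℝ)
    (hφ : HasGradientAt φ g b) :
    HasGradientAt (fun v => φ v + ⟪c, v - w₀⟫ + μ / 2 * ‖v - w₀‖ ^ 2)
      (g + c + μ • (b - w₀)) b := by
  have hshift : HasFDerivAt (fun v : E => v - w₀) (ContinuousLinearMap.id ℝ E) b :=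
    (hasFDerivAt_id b).sub_const w₀
  rw [hasGradientAt_iff_hasFDerivAt]
  refine ((hφ.hasFDerivAt.add ((toDual ℝ E c).hasFDerivAt.comp b hshift)).add
    (hshift.norm_sq.const_mul (μ / 2))).congr_fderiv ?_
  ext v
  simp only [ContinuousLinearMap.comp_id, map_add, map_smul, add_apply, smul_apply,
    toDual_apply_apply, coe_innerSL_apply, nsmul_eq_mul, Nat.cast_ofNat, smul_eq_mul]
  ring

theorem neg_mul_norm_sq_le_inner_gradient_sub {F : E → ℝ} {lam : ℝ} {x y : E}
    (hF : ConvexOn ℝ Set.univ fun w => F w + lam / 2 * ‖w‖ ^ 2)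
    (hx : DifferentiableAt ℝ F x) (hy : DifferentiableAt ℝ F y) :
    -(lam * ‖y - x‖ ^ 2) ≤ ⟪gradient F y - gradient F x, y - x⟫ := by
  have hderiv : ∀ z, DifferentiableAt ℝ F z → HasFDerivAt (fun w => F w + lam / 2 * ‖w‖ ^ 2)
      (fderiv ℝ F z + (lam / 2) • (2 • innerSL ℝ z)) z := fun z hz =>
    hz.hasFDerivAt.add ((hasStrictFDerivAt_norm_sq z).hasFDerivAt.const_mul (lam / 2))
  have hxy := hF.add_fderiv_sub_le (hderiv x hx) y
  have hyx := hF.add_fderiv_sub_le (hderiv y hy) x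
  simp only [add_apply, smul_apply, nsmul_eq_mul, Nat.cast_ofNat, innerSL_apply_apply,
    smul_eq_mul] at hxy hyx
  have hD : fderiv ℝ F y (x - y) = -fderiv ℝ F y (y - x) := by rw [← map_neg, neg_sub]
  have hI : ⟪y, x - y⟫ = -⟪y, y - x⟫ := by rw [← inner_neg_right, neg_sub]
  have hnorm : ‖y - x‖ ^ 2 = ⟪y, y - x⟫ - ⟪x, y - x⟫ := by
    rw [← inner_sub_left, real_inner_self_eq_norm_sq]
  rw [inner_sub_left, inner_gradient_left, inner_gradient_left]
  linear_combination hxy + hyx - hD - lam * hI - lam * hnorm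

/-- Mean value inequality for `φ - ⟪∇φ x, ·⟫` on the ball of radius `‖y - x‖`; this gives the
constant `L` rather than the optimal `L / 2`. -/
theorem le_add_inner_gradient_add_mul_norm_sq {φ : E → ℝ} {L : ℝ} (hL : 0 ≤ L)
    (hφ : Differentiable ℝ φ) (hlip : ∀ a b, ‖gradient φ a - gradient φ b‖ ≤ L * ‖a - b‖)
    (x y : E) :
    φ y ≤ φ x + ⟪gradient φ x, y - x⟫ + L * ‖y - x‖ ^ 2 := by
  set s := Metric.closedBall x ‖y - x‖
  have hderiv : ∀ z ∈ s, HasFDerivWithinAt (fun v => φ v - ⟪gradient φ x, v⟫)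
      (toDual ℝ E (gradient φ z - gradient φ x)) s z := fun z _ => by
    rw [map_sub]
    exact ((hφ z).hasGradientAt.hasFDerivAt.sub
      (toDual ℝ E (gradient φ x)).hasFDerivAt).hasFDerivWithinAt
  have hbound : ∀ z ∈ s, ‖toDual ℝ E (gradient φ z - gradient φ x)‖ ≤ L * ‖y - x‖ :=
    fun z hz => by
      rw [LinearIsometryEquiv.norm_map]
      exact (hlip z x).trans (mul_le_mul_of_nonneg_left (mem_closedBall_iff_norm.1 hz) hL)
  have hmvt := (convex_closedBall x ‖y - x‖).norm_image_sub_le_of_norm_hasFDerivWithin_le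
    hderiv hbound (Metric.mem_closedBall_self (norm_nonneg _))
    (mem_closedBall_iff_norm.2 le_rfl)
  rw [Real.norm_eq_abs, abs_le] at hmvt
  rw [inner_sub_right, sq, ← mul_assoc]
  linarith [hmvt.2]

theorem feddane_stationary {F : E → ℝ} {μ : ℝ} {w₀ g b : E} (hF : DifferentiableAt ℝ F b)
    (hmin : ∀ v, F b + ⟪g - gradient F w₀, b - w₀⟫ + μ / 2 * ‖b - w₀‖ ^ 2 ≤
      F v + ⟪g - gradient F w₀, v - w₀⟫ + μ / 2 * ‖v - w₀‖ ^ 2) :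
    μ • (b - w₀) = -((gradient F b - gradient F w₀) + g) := by
  have h := IsLocalMin.hasGradientAt_eq_zero_s7 (Filter.Eventually.of_forall hmin)
    (hF.hasGradientAt.add_inner_add_mul_norm_sq μ)
  rw [eq_neg_iff_add_eq_zero, ← h]
  abel

theorem feddane_dist_le {F : E → ℝ} {lam μ : ℝ} {w₀ g b : E}
    (hweak : ConvexOn ℝ Set.univ fun w => F w + lam / 2 * ‖w‖ ^ 2)
    (hF₀ : DifferentiableAt ℝ F w₀) (hFb : DifferentiableAt ℝ F b)
    (hstat : μ • (b - w₀) = -((gradient F b - gradient F w₀) + g)) :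
    (μ - lam) * ‖b - w₀‖ ≤ ‖g‖ := by
  have hmono := neg_mul_norm_sq_le_inner_gradient_sub hweak hF₀ hFb
  have hid : μ * ‖b - w₀‖ ^ 2 =
      -⟪gradient F b - gradient F w₀, b - w₀⟫ - ⟪g, b - w₀⟫ := by
    rw [← real_inner_self_eq_norm_sq, ← real_inner_smul_left, hstat, inner_neg_left,
      inner_add_left]
    ring
  have hg : -⟪g, b - w₀⟫ ≤ ‖g‖ * ‖b - w₀‖ := by
    simpa [inner_neg_left] using real_inner_le_norm (-g) (b - w₀)
  rcases (norm_nonneg (b - w₀)).eq_or_lt with h0 | hpos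
  · rw [← h0, mul_zero]
    exact norm_nonneg g
  · refine le_of_mul_le_mul_right ?_ hpos
    nlinarith

theorem feddane_local_descent {f : E → ℝ} {L μ lam γ : ℝ} {w₀ b u g ζ : E}
    (hL : 0 ≤ L) (hμ : 0 < μ) (hμlam : lam < μ) (hγ : 0 ≤ γ) (hf : Differentiable ℝ f)
    (hflip : ∀ x y, ‖gradient f x - gradient f y‖ ≤ L * ‖x - y‖)
    (hstat : μ • (b - w₀) = -(ζ + g)) (hζ : ‖ζ‖ ≤ L * ‖b - w₀‖)
    (hdist : (μ - lam) * ‖b - w₀‖ ≤ ‖g‖) (hinexact : ‖u - b‖ ≤ γ * ‖b - w₀‖) :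
    f u ≤ f w₀ + ((L / (μ * (μ - lam)) + γ / (μ - lam)) * (‖gradient f w₀‖ * ‖g‖)
      - ⟪gradient f w₀, g⟫ / μ + L * (1 + γ) ^ 2 / (μ - lam) ^ 2 * ‖g‖ ^ 2) := by
  set G := gradient f w₀
  set r := ‖b - w₀‖
  have hr : r ≤ ‖g‖ / (μ - lam) := (le_div_iff₀' (sub_pos.2 hμlam)).2 hdist
  have hstep : ⟪G, b - w₀⟫ ≤ (L * (‖G‖ * r) - ⟪G, g⟫) / μ := by
    rw [le_div_iff₀' hμ, ← real_inner_smul_right, hstat, inner_neg_right, inner_add_right]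
    have hGζ := (real_inner_le_norm G (-ζ)).trans
      (mul_le_mul_of_nonneg_left ((norm_neg ζ).trans_le hζ) (norm_nonneg G))
    rw [inner_neg_right] at hGζ
    linarith
  have hinner : ⟪G, u - w₀⟫ ≤ (L / μ + γ) * (‖G‖ * r) - ⟪G, g⟫ / μ := by
    have hGu := (real_inner_le_norm G (u - b)).trans
      (mul_le_mul_of_nonneg_left hinexact (norm_nonneg G))
    rw [← sub_add_sub_cancel u b w₀, inner_add_right]
    calc ⟪G, u - b⟫ + ⟪G, b - w₀⟫
        ≤ ‖G‖ * (γ * r) + (L * (‖G‖ * r) - ⟪G, g⟫) / μ := add_le_add hGu hstep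
      _ = (L / μ + γ) * (‖G‖ * r) - ⟪G, g⟫ / μ := by field_simp; ring
  have hnorm : ‖u - w₀‖ ≤ (1 + γ) * r := by
    calc ‖u - w₀‖ = ‖(u - b) + (b - w₀)‖ := by rw [sub_add_sub_cancel]
      _ ≤ γ * r + r := (norm_add_le _ _).trans (add_le_add_left hinexact _)
      _ = (1 + γ) * r := by ring
  calc f u ≤ f w₀ + ⟪G, u - w₀⟫ + L * ‖u - w₀‖ ^ 2 :=
        le_add_inner_gradient_add_mul_norm_sq hL hf hflip w₀ u
    _ ≤ f w₀ + ((L / μ + γ) * (‖G‖ * r) - ⟪G, g⟫ / μ) + L * ((1 + γ) * r) ^ 2 := by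
        gcongr
    _ ≤ f w₀ + ((L / μ + γ) * (‖G‖ * (‖g‖ / (μ - lam))) - ⟪G, g⟫ / μ)
          + L * ((1 + γ) * (‖g‖ / (μ - lam))) ^ 2 := by
        gcongr
    _ = _ := by field_simp; ring

end InnerProductSpace

theorem feddane_expected_descent_nonconvex_general {d N : ℕ}
    {Ω : Type*} [MeasurableSpace Ω] (ℙ : Measure Ω) [IsProbabilityMeasure ℙ]
    (F : Fin N → EuclideanSpace ℝ (Fin d) → ℝ) (hF : ∀ k, ContDiff ℝ 1 (F k))
    (p : Fin N → ℝ) (hp : ∀ k, 0 ≤ p k) (hpsum : ∑ k, p k = 1)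
    (f : EuclideanSpace ℝ (Fin d) → ℝ) (hf : f = fun w => ∑ k, p k * F k w)
    (w₀ : EuclideanSpace ℝ (Fin d)) (lam μ γ L : ℝ)
    (hlam : 0 ≤ lam) (hμ : lam < μ) (hγ0 : 0 ≤ γ) (hL : 0 ≤ L)
    (hweak : ∀ k, ConvexOn ℝ Set.univ fun w => F k w + lam / 2 * ‖w‖ ^ 2)
    (hFlip : ∀ k x y, ‖gradient (F k) x - gradient (F k) y‖ ≤ L * ‖x - y‖)
    (hflip : ∀ x y, ‖gradient f x - gradient f y‖ ≤ L * ‖x - y‖)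
    (g : Ω → EuclideanSpace ℝ (Fin d))
    (hg_int : Integrable g ℙ)
    (hg_mean : (∫ ω, g ω ∂ℙ) = gradient f w₀)
    (P : Fin N → EuclideanSpace ℝ (Fin d) → EuclideanSpace ℝ (Fin d) → ℝ)
    (hP : P = fun k gv w =>
      F k w + ⟪gv - gradient (F k) w₀, w - w₀⟫ + μ / 2 * ‖w - w₀‖ ^ 2)
    (w wbar : Fin N → Ω → EuclideanSpace ℝ (Fin d))
    (hmin : ∀ k ω v, P k (g ω) (wbar k ω) ≤ P k (g ω) v)
    (hinexact : ∀ k ω, ‖w k ω - wbar k ω‖ ≤ γ * ‖wbar k ω - w₀‖)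
    (hfw_int : ∀ k, Integrable (fun ω => f (w k ω)) ℙ)
    (hvar_int : Integrable (fun ω => ‖g ω - gradient f w₀‖ ^ 2) ℙ) :
    (∑ k, p k * ∫ ω, f (w k ω) ∂ℙ) ≤
      f w₀ - (1 / μ - 3 * γ / (2 * (μ - lam))) * ‖gradient f w₀‖ ^ 2 +
        (L * (1 + γ) ^ 2 / (μ - lam) ^ 2 + 3 * L / (2 * μ * (μ - lam))) *
          ‖gradient f w₀‖ ^ 2 +
        (L * (1 + γ) ^ 2 / (μ - lam) ^ 2 + L / (μ * (μ - lam)) + γ / (μ - lam)) *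
          ∫ ω, ‖g ω - gradient f w₀‖ ^ 2 ∂ℙ := by
  have hμ₀ : 0 < μ := hlam.trans_lt hμ
  have hgap : 0 < μ - lam := sub_pos.2 hμ
  have hFd : ∀ k, Differentiable ℝ (F k) := fun k => (hF k).differentiable one_ne_zero
  have hfd : Differentiable ℝ f := hf ▸ Differentiable.fun_sum fun k _ => (hFd k).const_mul (p k)
  subst hP
  set G := gradient f w₀
  set C₁ := L / (μ * (μ - lam)) + γ / (μ - lam) with hC₁
  set C₂ := L * (1 + γ) ^ 2 / (μ - lam) ^ 2
  have hC₁_nonneg : 0 ≤ C₁ :=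
    add_nonneg (div_nonneg hL (mul_pos hμ₀ hgap).le) (div_nonneg hγ0 hgap.le)
  calc ∑ k, p k * ∫ ω, f (w k ω) ∂ℙ
      ≤ f w₀ + (3 / 2 * C₁ + C₂ - 1 / μ) * ‖G‖ ^ 2 + (C₁ / 2 + C₂) * ∫ ω, ‖g ω - G‖ ^ 2 ∂ℙ := by
        refine sum_mul_integral_le_of_le_centered (b := 2 * C₂ - 1 / μ) hp hpsum hfw_int hg_int
          hg_mean hvar_int fun k ω => ?_
        have hstat := feddane_stationary (hFd k _) (hmin k ω)
        refine ((feddane_local_descent hL hμ₀ hμ hγ0 hfd hflip hstat (hFlip k _ _)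
          (feddane_dist_le (hweak k) (hFd k _) (hFd k _) hstat) (hinexact k ω)).trans
          (add_le_add le_rfl (le_centered_quadratic _ _ _ _ hC₁_nonneg))).trans_eq ?_
        ring
    _ ≤ _ := by
        have hV : 0 ≤ ∫ ω, ‖g ω - G‖ ^ 2 ∂ℙ := integral_nonneg fun ω => by positivity
        have h32 : 3 / 2 * C₁ = 3 * L / (2 * μ * (μ - lam)) + 3 * γ / (2 * (μ - lam)) := by
          rw [hC₁]
          field_simp
        linear_combination ‖G‖ ^ 2 * h32 + (∫ ω, ‖g ω - G‖ ^ 2 ∂ℙ) * hC₁ +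
          mul_nonneg (div_nonneg hC₁_nonneg zero_le_two) hV

/-- Expected descent bound (non-convex case).  Each `F k` has
`L`-Lipschitz gradient and is `λ`-weakly convex, `μ > λ ≥ 0`, `f` has `L`-Lipschitz
gradient, `g : Ω → ℝ^d` is a random vector with `E[g] = ∇f(w₀)`, and for each
device `k` and realization `g ω`, `w k ω` is a `γ`-inexact minimizer of the FedDANE
subproblem.  Then
`∑ k, p k * E[f(w k)] ≤ f(w₀) - (1/μ - 3γ/(2(μ-λ)))‖∇f(w₀)‖²
  + (L(1+γ)²/(μ-λ)² + 3L/(2μ(μ-λ)))‖∇f(w₀)‖²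
  + (L(1+γ)²/(μ-λ)² + L/(μ(μ-λ)) + γ/(μ-λ)) E[‖g - ∇f(w₀)‖²]`. -/
theorem feddane_expected_descent_nonconvex {d N : ℕ}
    {Ω : Type*} [MeasurableSpace Ω] (ℙ : Measure Ω) [IsProbabilityMeasure ℙ]
    (F : Fin N → EuclideanSpace ℝ (Fin d) → ℝ) (hF : ∀ k, ContDiff ℝ 1 (F k))
    (p : Fin N → ℝ) (hp : ∀ k, 0 ≤ p k) (hpsum : ∑ k, p k = 1)
    (f : EuclideanSpace ℝ (Fin d) → ℝ) (hf : f = fun w => ∑ k, p k * F k w)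
    (w₀ : EuclideanSpace ℝ (Fin d)) (lam μ γ L : ℝ)
    (hlam : 0 ≤ lam) (hμ : lam < μ) (hγ0 : 0 ≤ γ) (hγ1 : γ < 1) (hL : 0 ≤ L)
    (hweak : ∀ k, ConvexOn ℝ Set.univ fun w => F k w + lam / 2 * ‖w‖ ^ 2)
    (hFlip : ∀ k x y, ‖gradient (F k) x - gradient (F k) y‖ ≤ L * ‖x - y‖)
    (hflip : ∀ x y, ‖gradient f x - gradient f y‖ ≤ L * ‖x - y‖)
    (g : Ω → EuclideanSpace ℝ (Fin d))
    (hg_int : Integrable g ℙ)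
    (hg_mean : (∫ ω, g ω ∂ℙ) = gradient f w₀)
    (P : Fin N → EuclideanSpace ℝ (Fin d) → EuclideanSpace ℝ (Fin d) → ℝ)
    (hP : P = fun k gv w =>
      F k w + ⟪gv - gradient (F k) w₀, w - w₀⟫ + μ / 2 * ‖w - w₀‖ ^ 2)
    (w wbar : Fin N → Ω → EuclideanSpace ℝ (Fin d))
    (hmin : ∀ k ω v, P k (g ω) (wbar k ω) ≤ P k (g ω) v)
    (hinexact : ∀ k ω, ‖w k ω - wbar k ω‖ ≤ γ * ‖wbar k ω - w₀‖)
    (hfw_int : ∀ k, Integrable (fun ω => f (w k ω)) ℙ)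
    (hvar_int : Integrable (fun ω => ‖g ω - gradient f w₀‖ ^ 2) ℙ) :
    (∑ k, p k * ∫ ω, f (w k ω) ∂ℙ) ≤
      f w₀ - (1 / μ - 3 * γ / (2 * (μ - lam))) * ‖gradient f w₀‖ ^ 2 +
        (L * (1 + γ) ^ 2 / (μ - lam) ^ 2 + 3 * L / (2 * μ * (μ - lam))) *
          ‖gradient f w₀‖ ^ 2 +
        (L * (1 + γ) ^ 2 / (μ - lam) ^ 2 + L / (μ * (μ - lam)) + γ / (μ - lam)) *
          ∫ ω, ‖g ω - gradient f w₀‖ ^ 2 ∂ℙ :=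
  feddane_expected_descent_nonconvex_general ℙ F hF p hp hpsum f hf w₀ lam μ γ L hlam hμ hγ0 hL
    hweak hFlip hflip g hg_int hg_mean P hP w wbar hmin hinexact hfw_int hvar_int
end
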